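/- arXiv:2502.10019 — 3 statements merged into one kernel-verified Lean document; each statement's English description precedes it below -/
import Mathlib

section
/- For all u, w ∈ (0,1), letting z = √(w(1−u)) / (√(w(1−u)) + √(u(1−w))), one has H₂(u) + H₂(w) ≥ 2·(√(w(1−u)) + √(u(1−w)))² · H₂(z). -/
/-!
Put `a = √(w(1-u))`, `b = √(u(1-w))`, `p = √(uw)`, `q = √((1-u)(1-w))`. Then `ab = pq` and
`(a+b)² = 1 - d²` with `d = p - q`, and in natural logarithms the entropy gap
`H(u) + H(w) - 2(a+b)² H(a/(a+b))` equals `2d(q log q - p log p) - (1-d²) log(1-d²)`.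
As `x ↦ x log x` is convex and `p + q ≤ 1` by AM-GM, for fixed `d` the bracket only decreases
when `(p, q)` is moved up to `((1+d)/2, (1-d)/2)`, and there the claim is
`(1+d) log(1+d) + (1-d) log(1-d) ≤ 2 log 2 · d²`.
-/

/-- Binary entropy function. -/
noncomputable def H2 (x : ℝ) : ℝ := -x * Real.logb 2 x - (1 - x) * Real.logb 2 (1 - x)

open Real Set Filter Topology

theorem ConvexOn.map_add_sub_map_le_map_add_sub_map {s : Set ℝ} {f : ℝ → ℝ}
    (hf : ConvexOn ℝ s f) {x y d : ℝ} (hx : x ∈ s) (hyd : y + d ∈ s) (hxy : x ≤ y) (hd : 0 ≤ d) :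
    f (x + d) - f x ≤ f (y + d) - f y := by
  rcases hd.eq_or_lt with rfl | hd
  · simp
  have hxd : x + d ∈ s := hf.1.ordConnected.out hx hyd ⟨by linarith, by linarith⟩
  have hy : y ∈ s := hf.1.ordConnected.out hx hyd ⟨hxy, by linarith⟩
  have h₁ : slope f x (x + d) ≤ slope f x (y + d) :=
    hf.slope_mono hx ⟨hxd, by simpa using hd.ne'⟩ ⟨hyd, by simp; linarith⟩ (by linarith)
  have h₂ : slope f (y + d) x ≤ slope f (y + d) y :=
    hf.slope_mono hyd ⟨hx, by simp; linarith⟩ ⟨hy, by simpa using hd.ne'⟩ hxy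
  rw [slope_comm f (y + d) x] at h₂
  have h := h₁.trans h₂
  rw [slope_def_field, slope_def_field, add_sub_cancel_left, show y - (y + d) = -d by ring,
    div_neg, ← neg_div, neg_sub] at h
  exact (div_le_div_iff_of_pos_right hd).mp h

theorem hasSum_mul_log_one_add_add_mul_log_one_sub {d : ℝ} (hd : |d| < 1) :
    HasSum (fun k : ℕ => (d ^ 2) ^ (k + 1) / ((2 * k + 1) * (k + 1)))
      ((1 + d) * log (1 + d) + (1 - d) * log (1 - d)) := by
  have hd₂ : |d ^ 2| < 1 := by
    rw [abs_pow]
    exact pow_lt_one₀ (abs_nonneg d) hd two_ne_zero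
  obtain ⟨hd₁, hd₁'⟩ := abs_lt.mp hd
  convert ((hasSum_log_sub_log_of_abs_lt_one hd).mul_left d).sub
    (hasSum_pow_div_log_of_abs_lt_one hd₂) using 1
  · rfl
  · ext k
    field_simp
    ring
  · rw [show (1 : ℝ) - d ^ 2 = (1 + d) * (1 - d) by ring, log_mul (by linarith) (by linarith)]
    ring

/-- The ratio of the left side to `d ^ 2` is a power series in `d ^ 2` with nonnegative
coefficients, so it increases with `|d|`, towards `2 * log 2` as `|d| → 1`. -/
theorem mul_log_one_add_add_mul_log_one_sub_le {d : ℝ} (hd : |d| < 1) :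
    (1 + d) * log (1 + d) + (1 - d) * log (1 - d) ≤ 2 * log 2 * d ^ 2 := by
  set G : ℝ → ℝ := fun t => (1 + t) * log (1 + t) + (1 - t) * log (1 - t) with hG
  have hGcont : Continuous G :=
    (continuous_mul_log.comp (continuous_const.add continuous_id)).add
      (continuous_mul_log.comp (continuous_const.sub continuous_id))
  have hG1 : G 1 = 2 * log 2 := by norm_num [hG]
  have key : ∀ t ∈ Ioo |d| 1, t ^ 2 * G d ≤ d ^ 2 * G t := by
    rintro t ⟨hdt, ht1⟩
    have hsq : d ^ 2 ≤ t ^ 2 := by rw [← sq_abs d]; gcongr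
    refine hasSum_le (fun k => ?_) ((hasSum_mul_log_one_add_add_mul_log_one_sub hd).mul_left _)
      ((hasSum_mul_log_one_add_add_mul_log_one_sub
        (by rwa [abs_of_pos ((abs_nonneg d).trans_lt hdt)])).mul_left _)
    rw [← mul_div_assoc, ← mul_div_assoc]
    refine div_le_div_of_nonneg_right ?_ (by positivity)
    calc t ^ 2 * (d ^ 2) ^ (k + 1) = d ^ 2 * t ^ 2 * (d ^ 2) ^ k := by ring
      _ ≤ d ^ 2 * t ^ 2 * (t ^ 2) ^ k := by gcongr
      _ = d ^ 2 * (t ^ 2) ^ (k + 1) := by ring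
  have hlim₁ : Tendsto (fun t => t ^ 2 * G d) (𝓝[<] 1) (𝓝 (G d)) :=
    (((continuous_pow 2).mul continuous_const).tendsto' 1 (G d) (by simp [hG])).mono_left
      nhdsWithin_le_nhds
  have hlim₂ : Tendsto (fun t => d ^ 2 * G t) (𝓝[<] 1) (𝓝 (d ^ 2 * G 1)) :=
    ((continuous_const.mul hGcont).tendsto 1).mono_left nhdsWithin_le_nhds
  have h := le_of_tendsto_of_tendsto hlim₁ hlim₂
    (mem_of_superset (Ioo_mem_nhdsLT hd) key)
  rw [hG1] at h
  linarith

theorem one_sub_sq_mul_log_one_sub_sq_le {p q : ℝ} (hp : 0 < p) (hq : 0 < q) (hpq : p + q ≤ 1) :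
    (1 - (p - q) ^ 2) * log (1 - (p - q) ^ 2) ≤ 2 * (p - q) * (q * log q - p * log p) := by
  wlog hqp : q ≤ p generalizing p q
  · have h := this hq hp (by linarith) (by linarith)
    rw [show (q - p) ^ 2 = (p - q) ^ 2 by ring] at h
    linarith
  set d := p - q
  have hd₁ : |d| < 1 := by rw [abs_of_nonneg (by linarith)]; linarith
  have hslope : p * log p - q * log q ≤
      (1 + d) / 2 * log ((1 + d) / 2) - (1 - d) / 2 * log ((1 - d) / 2) := by
    have h := convexOn_mul_log.map_add_sub_map_le_map_add_sub_map (x := q) (y := (1 - d) / 2)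
      (d := d) hq.le (by simp only [mem_Ici]; linarith) (by linarith) (by linarith)
    rwa [show q + d = p by ring, show (1 - d) / 2 + d = (1 + d) / 2 by ring] at h
  have hG := mul_log_one_add_add_mul_log_one_sub_le hd₁
  obtain ⟨hneg, hlt⟩ := abs_lt.mp hd₁
  rw [log_div (by linarith) two_ne_zero, log_div (by linarith) two_ne_zero] at hslope
  rw [show 1 - d ^ 2 = (1 + d) * (1 - d) by ring, log_mul (by linarith) (by linarith)]
  linarith [mul_le_mul_of_nonneg_left hslope (by linarith : (0 : ℝ) ≤ 2 * d)]

theorem log_eq_of_sq_eq_mul {a x y : ℝ} (hx : 0 < x) (hy : 0 < y) (h : a ^ 2 = x * y) :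
    log a = (log x + log y) / 2 := by
  rw [← log_mul hx.ne' hy.ne', ← h, log_pow]
  push_cast
  ring

theorem binEntropy_add_binEntropy_sub_eq {u w a b p q : ℝ} (hu : u ∈ Ioo 0 1) (hw : w ∈ Ioo 0 1)
    (ha : 0 < a) (hb : 0 < b) (hp : 0 < p) (hq : 0 < q) (ha₂ : a ^ 2 = w * (1 - u))
    (hb₂ : b ^ 2 = u * (1 - w)) (hp₂ : p ^ 2 = u * w) (hq₂ : q ^ 2 = (1 - u) * (1 - w)) :
    binEntropy u + binEntropy w - 2 * (a + b) ^ 2 * binEntropy (a / (a + b)) =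
      2 * (p - q) * (q * log q - p * log p) - (1 - (p - q) ^ 2) * log (1 - (p - q) ^ 2) := by
  obtain ⟨hu₀, hu₁⟩ := hu
  obtain ⟨hw₀, hw₁⟩ := hw
  have hu₁' : 0 < 1 - u := by linarith
  have hw₁' : 0 < 1 - w := by linarith
  have hab : a * b = p * q := by
    refine (pow_left_inj₀ (by positivity) (by positivity) two_ne_zero).mp ?_
    linear_combination (b ^ 2) * ha₂ + w * (1 - u) * hb₂ - q ^ 2 * hp₂ - u * w * hq₂
  have hs : 1 - (p - q) ^ 2 = (a + b) ^ 2 := by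
    linear_combination -ha₂ - hb₂ - 2 * hab - hp₂ - hq₂
  have hentropy : 2 * (a + b) ^ 2 * binEntropy (a / (a + b)) =
      -2 * (a + b) * (a * log a + b * log b) + 2 * (a + b) ^ 2 * log (a + b) := by
    have hs₀ : 0 < a + b := by positivity
    have hb' : 1 - a / (a + b) = b / (a + b) := by field_simp; ring
    simp only [binEntropy_eq_negMulLog_add_negMulLog_one_sub, negMulLog, hb']
    rw [log_div ha.ne' hs₀.ne', log_div hb.ne' hs₀.ne']
    field_simp
    ring
  rw [hentropy, hs, log_pow]
  simp only [binEntropy_eq_negMulLog_add_negMulLog_one_sub, negMulLog]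
  rw [log_eq_of_sq_eq_mul hw₀ hu₁' ha₂,
    log_eq_of_sq_eq_mul hu₀ hw₁' hb₂, log_eq_of_sq_eq_mul hu₀ hw₀ hp₂,
    log_eq_of_sq_eq_mul hu₁' hw₁' hq₂]
  push_cast
  linear_combination (log u + log (1 - w)) * hb₂ + (log w + log (1 - u)) * ha₂ +
    (log u + log w) * hp₂ + (log (1 - u) + log (1 - w)) * hq₂ +
    (log u + log w + log (1 - u) + log (1 - w)) * hab

theorem H2_eq_binEntropy_div_log_two (x : ℝ) : H2 x = binEntropy x / log 2 := by
  simp only [H2, binEntropy_eq_negMulLog_add_negMulLog_one_sub, negMulLog, logb]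
  ring

theorem sqrt_mul_le_add_div_two {x y : ℝ} (hx : 0 ≤ x) (hy : 0 ≤ y) : √(x * y) ≤ (x + y) / 2 :=
  sqrt_le_iff.mpr ⟨by positivity, by nlinarith [sq_nonneg (x - y)]⟩

theorem two_mul_sq_mul_binEntropy_le {u w : ℝ} (hu : u ∈ Ioo 0 1) (hw : w ∈ Ioo 0 1) :
    2 * (√(w * (1 - u)) + √(u * (1 - w))) ^ 2 *
        binEntropy (√(w * (1 - u)) / (√(w * (1 - u)) + √(u * (1 - w)))) ≤
      binEntropy u + binEntropy w := by
  obtain ⟨hu₀, hu₁⟩ := hu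
  obtain ⟨hw₀, hw₁⟩ := hw
  have hu₁' : 0 < 1 - u := by linarith
  have hw₁' : 0 < 1 - w := by linarith
  have hpq : √(u * w) + √((1 - u) * (1 - w)) ≤ 1 := by
    linarith [sqrt_mul_le_add_div_two hu₀.le hw₀.le, sqrt_mul_le_add_div_two hu₁'.le hw₁'.le]
  have hgap := binEntropy_add_binEntropy_sub_eq ⟨hu₀, hu₁⟩ ⟨hw₀, hw₁⟩
    (sqrt_pos.mpr (mul_pos hw₀ hu₁')) (sqrt_pos.mpr (mul_pos hu₀ hw₁'))
    (sqrt_pos.mpr (mul_pos hu₀ hw₀)) (sqrt_pos.mpr (mul_pos hu₁' hw₁'))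
    (sq_sqrt (by positivity)) (sq_sqrt (by positivity)) (sq_sqrt (by positivity))
    (sq_sqrt (by positivity))
  linarith [one_sub_sq_mul_log_one_sub_sq_le (sqrt_pos.mpr (mul_pos hu₀ hw₀))
    (sqrt_pos.mpr (mul_pos hu₁' hw₁')) hpq]

theorem stmt8 (u w : ℝ) (hu : u ∈ Set.Ioo (0 : ℝ) 1) (hw : w ∈ Set.Ioo (0 : ℝ) 1) :
    H2 u + H2 w ≥
      2 * (Real.sqrt (w * (1 - u)) + Real.sqrt (u * (1 - w))) ^ 2 *
        H2 (Real.sqrt (w * (1 - u)) /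
          (Real.sqrt (w * (1 - u)) + Real.sqrt (u * (1 - w)))) := by
  simp only [H2_eq_binEntropy_div_log_two, ge_iff_le, ← add_div, mul_div_assoc']
  exact div_le_div_of_nonneg_right (two_mul_sq_mul_binEntropy_le hu hw) (log_pos one_lt_two).le
end

section
/- Suppose ψ : (−1,1)×[0,1] → ℝ is nonnegative, satisfies ψ(a,b) = 0 whenever √(1−a²) ≤ b, satisfies ψ(−a,b) = ψ(a,b) for all a,b, and satisfies: for every finite probability space (X,p) and all functions u,w : X → (−1,1), (1/2)·E[(u−w)·(u/√(1−u²) − w/√(1−w²))] ≥ ψ((E[u]+E[w])/2, (E[√(1−u²)]+E[√(1−w²)])/2) − (ψ(E[u],E[√(1−u²)]) + ψ(E[w],E[√(1−w²)]))/2. Then for every n ≥ 1 and every function d : {−1,1}ⁿ → (−1,1), one has 2⁻ⁿ · Σ_{x∼y} (d_x − d_y)·(d_x/√(1−d_x²) − d_y/√(1−d_y²)) ≥ ψ(2⁻ⁿ·Σ_y d_y, 2⁻ⁿ·Σ_y √(1−d_y²)), where the first sum is over unordered pairs of adjacent vertices, each counted once. -/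
/-- Flip the `i`-th coordinate of a vertex of the hypercube. -/
def flipCoord {n : ℕ} (y : Fin n → Bool) (i : Fin n) : Fin n → Bool :=
  Function.update y i (!(y i))

lemma flip_cons_zero {n : ℕ} (b : Bool) (y : Fin n → Bool) :
    flipCoord (Fin.cons b y) 0 = Fin.cons (!b) y := by
  unfold flipCoord
  rw [Fin.cons_zero, Fin.update_cons_zero]

lemma flip_cons_succ {n : ℕ} (b : Bool) (y : Fin n → Bool) (i : Fin n) :
    flipCoord (Fin.cons b y) i.succ = Fin.cons b (flipCoord y i) := by
  unfold flipCoord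
  rw [Fin.cons_succ, Fin.cons_update]

/-- auxiliary quadratic form -/
noncomputable def gq (x z : ℝ) : ℝ :=
  (x - z) * (x / Real.sqrt (1 - x ^ 2) - z / Real.sqrt (1 - z ^ 2))

lemma gq_symm (x z : ℝ) : gq x z = gq z x := by unfold gq; ring

lemma sum_cons {n : ℕ} (f : (Fin (n + 1) → Bool) → ℝ) :
    (∑ y : Fin (n + 1) → Bool, f y) =
      (∑ y : Fin n → Bool, f (Fin.cons true y)) +
        ∑ y : Fin n → Bool, f (Fin.cons false y) := by
  rw [← (Fin.consEquiv (fun _ : Fin (n + 1) => Bool)).sum_comp f, Fintype.sum_prod_type,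
    Fintype.sum_bool]
  rfl

theorem auxMain (ψ : ℝ → ℝ → ℝ)
    (hzero : ∀ a b : ℝ, a ∈ Set.Ioo (-1 : ℝ) 1 → b ∈ Set.Icc (0 : ℝ) 1 →
      Real.sqrt (1 - a ^ 2) ≤ b → ψ a b = 0)
    (hkey : ∀ (X : Type) [Fintype X], ∀ p u w : X → ℝ,
      (∀ x, 0 ≤ p x) → (∑ x, p x) = 1 →
      (∀ x, u x ∈ Set.Ioo (-1 : ℝ) 1) → (∀ x, w x ∈ Set.Ioo (-1 : ℝ) 1) →
      (1 / 2) * (∑ x, p x * ((u x - w x) *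
          (u x / Real.sqrt (1 - (u x) ^ 2) - w x / Real.sqrt (1 - (w x) ^ 2)))) ≥
        ψ (((∑ x, p x * u x) + ∑ x, p x * w x) / 2)
          (((∑ x, p x * Real.sqrt (1 - (u x) ^ 2))
            + ∑ x, p x * Real.sqrt (1 - (w x) ^ 2)) / 2)
        - (ψ (∑ x, p x * u x) (∑ x, p x * Real.sqrt (1 - (u x) ^ 2))
           + ψ (∑ x, p x * w x) (∑ x, p x * Real.sqrt (1 - (w x) ^ 2))) / 2) :
    ∀ (n : ℕ) (d : (Fin n → Bool) → ℝ), (∀ y, d y ∈ Set.Ioo (-1 : ℝ) 1) →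
    ((2 : ℝ) ^ n)⁻¹ * ((1 / 2) * ∑ y : Fin n → Bool, ∑ i : Fin n,
        gq (d (flipCoord y i)) (d y)) ≥
      ψ (((2 : ℝ) ^ n)⁻¹ * ∑ y : Fin n → Bool, d y)
        (((2 : ℝ) ^ n)⁻¹ * ∑ y : Fin n → Bool, Real.sqrt (1 - (d y) ^ 2)) := by
  intro n
  induction n with
  | zero =>
    intro d hd
    have h0 : ∀ f : (Fin 0 → Bool) → ℝ, (∑ y : Fin 0 → Bool, f y) = f default :=
      fun f => Fintype.sum_subsingleton f default
    have ha := hd default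
    have hb : Real.sqrt (1 - (d default) ^ 2) ∈ Set.Icc (0 : ℝ) 1 := by
      constructor
      · exact Real.sqrt_nonneg _
      · exact Real.sqrt_le_one.mpr (by nlinarith [sq_nonneg (d default)])
    rw [h0, h0 (fun y => Real.sqrt (1 - (d y) ^ 2)), h0]
    simp only [pow_zero, inv_one, one_mul]
    rw [hzero _ _ ha hb (by simp)]
    simp
  | succ n ih =>
    intro d hd
    set u : (Fin n → Bool) → ℝ := fun y => d (Fin.cons true y) with hu
    set w : (Fin n → Bool) → ℝ := fun y => d (Fin.cons false y) with hw
    have hdu : ∀ y, u y ∈ Set.Ioo (-1 : ℝ) 1 := fun y => hd _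
    have hdw : ∀ y, w y ∈ Set.Ioo (-1 : ℝ) 1 := fun y => hd _
    have IHu := ih u hdu
    have IHw := ih w hdw
    -- probability weights
    have hcard : (Fintype.card (Fin n → Bool) : ℝ) = 2 ^ n := by
      simp [Fintype.card_fun]
    have hpsum : (∑ _x : Fin n → Bool, ((2 : ℝ) ^ n)⁻¹) = 1 := by
      rw [Finset.sum_const, Finset.card_univ, nsmul_eq_mul, hcard]
      field_simp
    have key := hkey (Fin n → Bool) (fun _ => ((2 : ℝ) ^ n)⁻¹) u w
      (fun _ => by positivity) hpsum hdu hdw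
    have hmul : ∀ f : (Fin n → Bool) → ℝ,
        (∑ x : Fin n → Bool, ((2 : ℝ) ^ n)⁻¹ * f x) = ((2 : ℝ) ^ n)⁻¹ * ∑ x, f x :=
      fun f => by rw [Finset.mul_sum]
    rw [hmul, hmul, hmul, hmul, hmul] at key
    -- decomposition of the edge sum
    have hinner : ∀ (b : Bool) (y' : Fin n → Bool),
        (∑ i : Fin (n + 1), gq (d (flipCoord (Fin.cons b y') i)) (d (Fin.cons b y')))
          = gq (d (Fin.cons (!b) y')) (d (Fin.cons b y'))
            + ∑ i : Fin n, gq (d (Fin.cons b (flipCoord y' i))) (d (Fin.cons b y')) := by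
      intro b y'
      rw [Fin.sum_univ_succ, flip_cons_zero]
      simp only [flip_cons_succ]
    have hS : (∑ y : Fin (n + 1) → Bool, ∑ i : Fin (n + 1), gq (d (flipCoord y i)) (d y))
        = 2 * (∑ y' : Fin n → Bool, gq (u y') (w y'))
          + ((∑ y' : Fin n → Bool, ∑ i : Fin n, gq (u (flipCoord y' i)) (u y'))
            + ∑ y' : Fin n → Bool, ∑ i : Fin n, gq (w (flipCoord y' i)) (w y')) := by
      rw [sum_cons (fun y => ∑ i : Fin (n + 1), gq (d (flipCoord y i)) (d y))]
      simp only [hinner true, hinner false, Bool.not_true, Bool.not_false]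
      rw [Finset.sum_add_distrib, Finset.sum_add_distrib]
      have h1 : (∑ y' : Fin n → Bool, gq (d (Fin.cons false y')) (d (Fin.cons true y')))
          = ∑ y' : Fin n → Bool, gq (u y') (w y') :=
        Finset.sum_congr rfl fun y' _ => by rw [gq_symm]
      have h2 : (∑ y' : Fin n → Bool, gq (d (Fin.cons true y')) (d (Fin.cons false y')))
          = ∑ y' : Fin n → Bool, gq (u y') (w y') := rfl
      rw [h1, h2]
      ring
    have hda : (∑ y : Fin (n + 1) → Bool, d y) = (∑ y', u y') + ∑ y', w y' :=
      sum_cons d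
    have hdb : (∑ y : Fin (n + 1) → Bool, Real.sqrt (1 - (d y) ^ 2))
        = (∑ y', Real.sqrt (1 - (u y') ^ 2)) + ∑ y', Real.sqrt (1 - (w y') ^ 2) :=
      sum_cons _
    have hpow : ((2 : ℝ) ^ (n + 1))⁻¹ = ((2 : ℝ) ^ n)⁻¹ / 2 := by
      rw [pow_succ]; field_simp
    rw [hS, hda, hdb, hpow]
    have hgoal_a : (((2 : ℝ) ^ n)⁻¹ / 2) * ((∑ y', u y') + ∑ y', w y')
        = ((((2 : ℝ) ^ n)⁻¹ * ∑ y', u y') + ((2 : ℝ) ^ n)⁻¹ * ∑ y', w y') / 2 := by ring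
    have hgoal_b : (((2 : ℝ) ^ n)⁻¹ / 2) * ((∑ y', Real.sqrt (1 - (u y') ^ 2))
          + ∑ y', Real.sqrt (1 - (w y') ^ 2))
        = ((((2 : ℝ) ^ n)⁻¹ * ∑ y', Real.sqrt (1 - (u y') ^ 2))
          + ((2 : ℝ) ^ n)⁻¹ * ∑ y', Real.sqrt (1 - (w y') ^ 2)) / 2 := by ring
    rw [hgoal_a, hgoal_b]
    simp only [gq] at key IHu IHw ⊢
    linarith [key, IHu, IHw]

theorem stmt12 (ψ : ℝ → ℝ → ℝ)
    (hnonneg : ∀ a b : ℝ, a ∈ Set.Ioo (-1 : ℝ) 1 → b ∈ Set.Icc (0 : ℝ) 1 → 0 ≤ ψ a b)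
    (hzero : ∀ a b : ℝ, a ∈ Set.Ioo (-1 : ℝ) 1 → b ∈ Set.Icc (0 : ℝ) 1 →
      Real.sqrt (1 - a ^ 2) ≤ b → ψ a b = 0)
    (hsym : ∀ a b : ℝ, a ∈ Set.Ioo (-1 : ℝ) 1 → b ∈ Set.Icc (0 : ℝ) 1 →
      ψ (-a) b = ψ a b)
    (hkey : ∀ (X : Type) [Fintype X], ∀ p u w : X → ℝ,
      (∀ x, 0 ≤ p x) → (∑ x, p x) = 1 →
      (∀ x, u x ∈ Set.Ioo (-1 : ℝ) 1) → (∀ x, w x ∈ Set.Ioo (-1 : ℝ) 1) →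
      (1 / 2) * (∑ x, p x * ((u x - w x) *
          (u x / Real.sqrt (1 - (u x) ^ 2) - w x / Real.sqrt (1 - (w x) ^ 2)))) ≥
        ψ (((∑ x, p x * u x) + ∑ x, p x * w x) / 2)
          (((∑ x, p x * Real.sqrt (1 - (u x) ^ 2))
            + ∑ x, p x * Real.sqrt (1 - (w x) ^ 2)) / 2)
        - (ψ (∑ x, p x * u x) (∑ x, p x * Real.sqrt (1 - (u x) ^ 2))
           + ψ (∑ x, p x * w x) (∑ x, p x * Real.sqrt (1 - (w x) ^ 2))) / 2)
    (n : ℕ) (hn : 1 ≤ n) (d : (Fin n → Bool) → ℝ)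
    (hd : ∀ y, d y ∈ Set.Ioo (-1 : ℝ) 1) :
    ((2 : ℝ) ^ n)⁻¹ * ((1 / 2) * ∑ y : Fin n → Bool, ∑ i : Fin n,
        (d (flipCoord y i) - d y) *
          (d (flipCoord y i) / Real.sqrt (1 - (d (flipCoord y i)) ^ 2) -
           d y / Real.sqrt (1 - (d y) ^ 2))) ≥
      ψ (((2 : ℝ) ^ n)⁻¹ * ∑ y : Fin n → Bool, d y)
        (((2 : ℝ) ^ n)⁻¹ * ∑ y : Fin n → Bool, Real.sqrt (1 - (d y) ^ 2)) := by
  exact auxMain ψ hzero hkey n d hd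
end

section
/- For all u₁, u₂, w ∈ (0,1/2) and λ ∈ [0,1] such that L(w) = λ·L(u₁) + (1−λ)·L(u₂), one has J(w) ≤ λ·J(u₁) + (1−λ)·J(u₂). (Equivalently, the function x ↦ J(L⁻¹(x)) is convex on (0,∞).) -/
/-- `J`, the derivative of the binary entropy function. -/
noncomputable def J (x : ℝ) : ℝ := Real.logb 2 ((1 - x) / x)

/-- `L(u) = 2·H₂(u)/(1 − 2u)` for `u ∈ [0,1/2)` (with `L(0) = 0`). -/
noncomputable def L (u : ℝ) : ℝ := 2 * H2 u / (1 - 2 * u)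

/-!
Since `L` is increasing, the claim says that `J` is a convex function of `L`, i.e. that the slope
`dJ/dL = J'/L' = -(1 - 2u)² / (u (1 - u) G(u))` is nondecreasing in `u`, where
`G(u) = (1 - 2u)² · ln 2 · L'(u)` (`LDerivNum`). Its derivative has the sign of `G(u) - 2(1 - 2u)²`,
which is nonnegative because the entropy is nonnegative and `ln((1 - u)/u) ≥ (1 - 2u)/(1 - u)`.
A nondecreasing slope gives the tangent-line inequality `J(u) - J(w) ≥ (dJ/dL)(w) · (L(u) - L(w))`;
averaging it over `u = u₁, u₂` with weights `λ, 1 - λ` gives the claim.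
-/

open Real Set

namespace MonotoneOn

variable {I : Set ℝ} {f g r g' : ℝ → ℝ}

theorem sub_mul_le_sub_mul_of_hasDerivAt (hr : MonotoneOn r I) (hI : I.OrdConnected)
    (hf : ∀ x ∈ I, HasDerivAt f (r x * g' x) x) (hg : ∀ x ∈ I, HasDerivAt g (g' x) x)
    (hg' : ∀ x ∈ I, 0 ≤ g' x) {w u : ℝ} (hw : w ∈ I) (hu : u ∈ I) :
    f w - r w * g w ≤ f u - r w * g u := by
  set F : ℝ → ℝ := fun y => f y - r w * g y
  have hF : ∀ y ∈ I, HasDerivAt F ((r y - r w) * g' y) y := fun y hy =>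
    ((hf y hy).sub ((hg y hy).const_mul (r w))).congr_deriv (by ring)
  have hFcont : ∀ a b, a ∈ I → b ∈ I → ContinuousOn F (Icc a b) := fun a b ha hb y hy =>
    (hF y (hI.out ha hb hy)).continuousAt.continuousWithinAt
  have hFderiv : ∀ a b, a ∈ I → b ∈ I → ∀ y ∈ interior (Icc a b),
      HasDerivWithinAt F ((r y - r w) * g' y) (interior (Icc a b)) y := fun a b ha hb y hy =>
    (hF y (hI.out ha hb (interior_subset hy))).hasDerivWithinAt
  rcases le_total w u with hwu | huw
  · refine monotoneOn_of_hasDerivWithinAt_nonneg (convex_Icc w u) (hFcont w u hw hu)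
      (hFderiv w u hw hu) (fun y hy => ?_) (left_mem_Icc.2 hwu) (right_mem_Icc.2 hwu) hwu
    rw [interior_Icc] at hy
    have hyI := hI.out hw hu (Ioo_subset_Icc_self hy)
    exact mul_nonneg (sub_nonneg.2 (hr hw hyI hy.1.le)) (hg' y hyI)
  · refine antitoneOn_of_hasDerivWithinAt_nonpos (convex_Icc u w) (hFcont u w hu hw)
      (hFderiv u w hu hw) (fun y hy => ?_) (left_mem_Icc.2 huw) (right_mem_Icc.2 huw) huw
    rw [interior_Icc] at hy
    have hyI := hI.out hu hw (Ioo_subset_Icc_self hy)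
    exact mul_nonpos_of_nonpos_of_nonneg (sub_nonpos.2 (hr hyI hw hy.2.le)) (hg' y hyI)

theorem le_convex_comb_of_hasDerivAt (hr : MonotoneOn r I) (hI : I.OrdConnected)
    (hf : ∀ x ∈ I, HasDerivAt f (r x * g' x) x) (hg : ∀ x ∈ I, HasDerivAt g (g' x) x)
    (hg' : ∀ x ∈ I, 0 ≤ g' x) {u₁ u₂ w t : ℝ} (hu₁ : u₁ ∈ I) (hu₂ : u₂ ∈ I) (hw : w ∈ I)
    (ht : t ∈ Icc (0 : ℝ) 1) (hgw : g w = t * g u₁ + (1 - t) * g u₂) :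
    f w ≤ t * f u₁ + (1 - t) * f u₂ := by
  have h₁ := hr.sub_mul_le_sub_mul_of_hasDerivAt hI hf hg hg' hw hu₁
  have h₂ := hr.sub_mul_le_sub_mul_of_hasDerivAt hI hf hg hg' hw hu₂
  linear_combination mul_le_mul_of_nonneg_left h₁ ht.1 +
    mul_le_mul_of_nonneg_left h₂ (sub_nonneg.2 ht.2) + r w * hgw

end MonotoneOn

noncomputable def LDerivNum (x : ℝ) : ℝ :=
  2 * (1 - 2 * x) * (log (1 - x) - log x) + 4 * binEntropy x

noncomputable def dJdL (x : ℝ) : ℝ := -(1 - 2 * x) ^ 2 / (x * (1 - x) * LDerivNum x)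

section

variable {x : ℝ}

theorem H2_eq_binEntropy_div : H2 = fun x => binEntropy x / log 2 := by
  funext x
  simp only [H2, binEntropy, logb, log_inv]
  ring

theorem J_eq_of_mem (hx : x ∈ Ioo (0 : ℝ) 1) : J x = (log (1 - x) - log x) / log 2 := by
  rw [J, logb, log_div (by linarith [hx.2]) hx.1.ne']

theorem hasDerivAt_log_one_sub_sub_log (hx : x ∈ Ioo (0 : ℝ) 1) :
    HasDerivAt (fun y => log (1 - y) - log y) (-1 / (x * (1 - x))) x := by
  have h₀ : x ≠ 0 := hx.1.ne'
  have h₁ : (1 : ℝ) - x ≠ 0 := by linarith [hx.2]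
  have h := (((hasDerivAt_id x).const_sub 1).log h₁).sub (hasDerivAt_log h₀)
  refine h.congr_deriv ?_
  simp only [id]
  field_simp
  ring

theorem hasDerivAt_J (hx : x ∈ Ioo (0 : ℝ) 1) : HasDerivAt J (-1 / (x * (1 - x) * log 2)) x := by
  have h := (hasDerivAt_log_one_sub_sub_log hx).div_const (log 2)
  rw [div_div] at h
  exact h.congr_of_eventuallyEq <|
    Filter.eventually_of_mem (Ioo_mem_nhds hx.1 hx.2) fun _ hy => J_eq_of_mem hy

theorem hasDerivAt_L (hx : x ∈ Ioo (0 : ℝ) (1 / 2)) :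
    HasDerivAt L (LDerivNum x / ((1 - 2 * x) ^ 2 * log 2)) x := by
  have h₀ : x ≠ 0 := hx.1.ne'
  have h₁ : x ≠ 1 := by linarith [hx.2]
  have h₂ : 1 - 2 * x ≠ 0 := by linarith [hx.2]
  have h := (((hasDerivAt_binEntropy h₀ h₁).div_const (log 2)).const_mul 2).div
    ((hasDerivAt_id x).const_mul 2 |>.const_sub 1) h₂
  have hlog : log 2 ≠ 0 := (log_pos one_lt_two).ne'
  have hL : L = fun y => 2 * (binEntropy y / log 2) / (1 - 2 * y) := by
    funext y
    simp only [L, H2_eq_binEntropy_div]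
  rw [hL]
  refine h.congr_deriv ?_
  simp only [LDerivNum, id]
  field_simp
  ring

theorem two_mul_sq_le_LDerivNum (hx : x ∈ Ioo (0 : ℝ) (1 / 2)) :
    2 * (1 - 2 * x) ^ 2 ≤ LDerivNum x := by
  have h₀ : 0 < x := hx.1
  have h₁ : 0 < 1 - x := by linarith [hx.2]
  have h₂ : 0 ≤ 1 - 2 * x := by linarith [hx.2]
  have hlog : (1 - 2 * x) / (1 - x) ≤ log (1 - x) - log x := by
    have h := one_sub_inv_le_log_of_pos (div_pos h₁ h₀)
    rwa [log_div h₁.ne' h₀.ne', inv_div, one_sub_div h₁.ne', sub_sub, ← two_mul] at h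
  have hdiv : 1 - 2 * x ≤ (1 - 2 * x) / (1 - x) := le_div_self h₂ h₁ (by linarith)
  have hent : 0 ≤ binEntropy x := binEntropy_nonneg h₀.le (by linarith [hx.2])
  calc 2 * (1 - 2 * x) ^ 2
      = 2 * (1 - 2 * x) * (1 - 2 * x) := by ring
    _ ≤ 2 * (1 - 2 * x) * (log (1 - x) - log x) := by gcongr 2 * (1 - 2 * x) * ?_; linarith
    _ ≤ LDerivNum x := by unfold LDerivNum; linarith

theorem LDerivNum_pos (hx : x ∈ Ioo (0 : ℝ) (1 / 2)) : 0 < LDerivNum x := by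
  have : 0 < 1 - 2 * x := by linarith [hx.2]
  exact lt_of_lt_of_le (by positivity) (two_mul_sq_le_LDerivNum hx)

theorem hasDerivAt_LDerivNum (hx : x ∈ Ioo (0 : ℝ) 1) :
    HasDerivAt LDerivNum (-2 * (1 - 2 * x) / (x * (1 - x))) x := by
  have h₀ : x ≠ 0 := hx.1.ne'
  have h₁ : x ≠ 1 := by linarith [hx.2]
  have h := ((((hasDerivAt_id x).const_mul 2).const_sub 1).const_mul 2).mul
    (hasDerivAt_log_one_sub_sub_log hx) |>.add ((hasDerivAt_binEntropy h₀ h₁).const_mul 4)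
  refine h.congr_deriv ?_
  have : 1 - x ≠ 0 := sub_ne_zero.2 h₁.symm
  simp only [id]
  field_simp
  ring

theorem hasDerivAt_dJdL (hx : x ∈ Ioo (0 : ℝ) (1 / 2)) :
    HasDerivAt dJdL ((1 - 2 * x) * (LDerivNum x - 2 * (1 - 2 * x) ^ 2) /
      (x * (1 - x) * LDerivNum x) ^ 2) x := by
  have hx' : x ∈ Ioo (0 : ℝ) 1 := ⟨hx.1, by linarith [hx.2]⟩
  have h₀ : x ≠ 0 := hx.1.ne'
  have h₁ : 1 - x ≠ 0 := by linarith [hx.2]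
  have hnum : HasDerivAt (fun y => -(1 - 2 * y) ^ 2) (4 * (1 - 2 * x)) x := by
    refine ((((hasDerivAt_id x).const_mul 2).const_sub 1).pow 2).neg.congr_deriv ?_
    simp only [id]
    ring
  have hden : HasDerivAt (fun y => y * (1 - y) * LDerivNum y)
      ((1 - 2 * x) * (LDerivNum x - 2)) x := by
    refine (((hasDerivAt_id x).mul ((hasDerivAt_id x).const_sub 1)).mul
      (hasDerivAt_LDerivNum hx')).congr_deriv ?_
    simp only [id, Pi.mul_apply]
    field_simp
    ring
  have hQ : x * (1 - x) * LDerivNum x ≠ 0 :=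
    (mul_pos (mul_pos hx.1 (sub_pos.2 hx'.2)) (LDerivNum_pos hx)).ne'
  refine (hnum.div hden hQ).congr_deriv ?_
  field_simp
  ring

theorem monotoneOn_dJdL : MonotoneOn dJdL (Ioo 0 (1 / 2)) := by
  refine monotoneOn_of_hasDerivWithinAt_nonneg (convex_Ioo 0 (1 / 2))
    (fun x hx => (hasDerivAt_dJdL hx).continuousAt.continuousWithinAt)
    (by rw [interior_Ioo]; exact fun x hx => (hasDerivAt_dJdL hx).hasDerivWithinAt) ?_
  rw [interior_Ioo]
  intro x hx
  have : 0 ≤ 1 - 2 * x := by linarith [hx.2]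
  have := sub_nonneg.2 (two_mul_sq_le_LDerivNum hx)
  positivity

theorem hasDerivAt_J_eq_dJdL_mul (hx : x ∈ Ioo (0 : ℝ) (1 / 2)) :
    HasDerivAt J (dJdL x * (LDerivNum x / ((1 - 2 * x) ^ 2 * log 2))) x := by
  refine (hasDerivAt_J ⟨hx.1, by linarith [hx.2]⟩).congr_deriv ?_
  have h₁ : 1 - x ≠ 0 := by linarith [hx.2]
  have h₂ : 1 - 2 * x ≠ 0 := by linarith [hx.2]
  have hG : LDerivNum x ≠ 0 := (LDerivNum_pos hx).ne'
  have : x ≠ 0 := hx.1.ne'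
  rw [dJdL, div_mul_div_comm, div_eq_div_iff (by positivity) (by positivity)]
  ring

end

theorem stmt15 (u₁ u₂ w lam : ℝ)
    (hu₁ : u₁ ∈ Set.Ioo (0 : ℝ) (1 / 2)) (hu₂ : u₂ ∈ Set.Ioo (0 : ℝ) (1 / 2))
    (hw : w ∈ Set.Ioo (0 : ℝ) (1 / 2)) (hlam : lam ∈ Set.Icc (0 : ℝ) 1)
    (hL : L w = lam * L u₁ + (1 - lam) * L u₂) :
    J w ≤ lam * J u₁ + (1 - lam) * J u₂ :=
  monotoneOn_dJdL.le_convex_comb_of_hasDerivAt ordConnected_Ioo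
    (fun _ hx => hasDerivAt_J_eq_dJdL_mul hx) (fun _ hx => hasDerivAt_L hx)
    (fun _ hx => div_nonneg (LDerivNum_pos hx).le (by positivity)) hu₁ hu₂ hw hlam hL
end
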